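/- For any point ξ = (ξ_1, …, ξ_N) with nonzero algebraic coordinates, the projective height of (1 : ξ_1 : ⋯ : ξ_N) satisfies h(ξ) ≥ (1/2)·log(N+1), with equality if and only if every coordinate ξ_i is a root of unity. -/

import Mathlib

noncomputable section

open Classical NumberField IsDedekindDomain

/-- The `v`-adic absolute value on a number field `K`, normalized so that
`|x|_v = N(v)^{-ord_v(x)}` (the standard absolute value raised to the local degree
`[K_v : ℚ_v]`, so that the weight of `v` in height formulas is `1/[K:ℚ]`). -/
def finAbs {K : Type} [Field K] [NumberField K]
    (v : HeightOneSpectrum (𝓞 K)) (x : K) : ℝ :=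
  if h : x = 0 then 0 else
    (Ideal.absNorm v.asIdeal : ℝ) ^
      (Multiplicative.toAdd (WithZero.unzero ((Valuation.ne_zero_iff (v.valuation K)).mpr h)))

/-- The projective height of a tuple of elements of a number field `K`,
using the euclidean norm at the archimedean places. -/
def projHeightK (K : Type) [Field K] [NumberField K] {ι : Type} [Fintype ι]
    (ξ : ι → K) : ℝ :=
  (∑ w : InfinitePlace K,
      ((w.mult : ℝ) / (Module.finrank ℚ K)) *
        Real.log (Real.sqrt (∑ i, (w (ξ i)) ^ 2)))
  + ∑ᶠ v : HeightOneSpectrum (𝓞 K),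
      ((1 : ℝ) / (Module.finrank ℚ K)) * Real.log (⨆ i, finAbs v (ξ i))

/-!
Write `η = (1, ξ_1, …, ξ_N)` and `n = N + 1`. By the product formula, the mean over `i` of
`log |η_i|_v`, summed over all places `v` with their weights, vanishes. Subtracting it place by
place turns `n · h(η)` into a weighted sum of local gaps: at an archimedean place,
`n · log ‖η‖₂` minus `∑ log |η_i|`, which is at least `(n/2) log n` by AM–GM; at a finite place,
`n · log ‖η‖_∞` minus `∑ log |η_i|`, which is at least `0`. Hence `h(η) ≥ ½ log n`, and equality
forces `|η_i|_v = |η_0|_v = 1` at every place `v`, which by Kronecker's theorem says exactly that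
every `ξ_i` is a root of unity.
-/

open Real Finset Function

section LogInequalities

variable {ι : Type*} [Fintype ι] {a : ι → ℝ}

lemma Real.sum_log_le_card_mul_log_mean [Nonempty ι] (ha : ∀ i, 0 < a i) :
    ∑ i, log (a i) ≤ Fintype.card ι * log ((∑ i, a i) / Fintype.card ι) := by
  have hn : (0 : ℝ) < Fintype.card ι := by exact_mod_cast Fintype.card_pos
  have hjensen := strictConcaveOn_log_Ioi.concaveOn.le_map_sum (t := univ) (p := a)
    (w := fun _ => (Fintype.card ι : ℝ)⁻¹) (fun _ _ => by positivity) (by simp) (fun i _ => ha i)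
  simp only [smul_eq_mul, ← mul_sum] at hjensen
  rw [inv_mul_eq_div, inv_mul_eq_div, div_le_iff₀ hn] at hjensen
  linarith

lemma Real.sum_log_eq_card_mul_log_mean_iff [Nonempty ι] (ha : ∀ i, 0 < a i) :
    ∑ i, log (a i) = Fintype.card ι * log ((∑ i, a i) / Fintype.card ι) ↔
      ∀ i j, a i = a j := by
  have hn : (0 : ℝ) < Fintype.card ι := by exact_mod_cast Fintype.card_pos
  have hjensen := strictConcaveOn_log_Ioi.map_sum_eq_iff_of_pos (t := univ) (p := a)
    (w := fun _ => (Fintype.card ι : ℝ)⁻¹) (fun _ _ => by positivity) (by simp) (fun i _ => ha i)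
  simp only [smul_eq_mul, ← mul_sum, mem_univ, forall_const] at hjensen
  rw [← hjensen, inv_mul_eq_div, inv_mul_eq_div, eq_div_iff hn.ne']
  constructor <;> intro h <;> linarith

lemma Real.sum_log_le_card_mul_log_iSup (ha : ∀ i, 0 < a i) :
    ∑ i, log (a i) ≤ Fintype.card ι * log (⨆ i, a i) := by
  have := Finset.sum_le_sum fun i (_ : i ∈ univ) =>
    log_le_log (ha i) (le_ciSup (Set.finite_range a).bddAbove i)
  simpa [Finset.card_univ] using this

lemma Real.sum_log_eq_card_mul_log_iSup_iff [Nonempty ι] (ha : ∀ i, 0 < a i) :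
    ∑ i, log (a i) = Fintype.card ι * log (⨆ i, a i) ↔ ∀ i j, a i = a j := by
  have hle i : a i ≤ ⨆ j, a j := le_ciSup (Set.finite_range a).bddAbove i
  have hsup : 0 < ⨆ j, a j := (ha (Classical.arbitrary ι)).trans_le (hle _)
  have hlog : (∑ i, log (a i) = ∑ _i : ι, log (⨆ j, a j)) ↔ ∀ i, a i = ⨆ j, a j := by
    rw [Finset.sum_eq_sum_iff_of_le fun i _ => log_le_log (ha i) (hle i)]
    simp only [mem_univ, forall_const]
    exact forall_congr' fun i => log_injOn_pos.eq_iff (ha i) hsup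
  simp only [sum_const, card_univ, nsmul_eq_mul] at hlog
  rw [hlog]
  constructor
  · intro h i j
    rw [h i, h j]
  · intro h i
    exact le_antisymm (hle i) (ciSup_le fun j => (h j i).le)

end LogInequalities

section LocalGaps

variable {ι : Type*} [Fintype ι] {a : ι → ℝ}

def euclideanLogGap (a : ι → ℝ) : ℝ :=
  Fintype.card ι * log √(∑ i, a i ^ 2) - Fintype.card ι * log (Fintype.card ι) / 2
    - ∑ i, log (a i)

def supLogGap (a : ι → ℝ) : ℝ :=
  Fintype.card ι * log (⨆ i, a i) - ∑ i, log (a i)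

lemma euclideanLogGap_eq [Nonempty ι] (ha : ∀ i, 0 < a i) :
    euclideanLogGap a = (Fintype.card ι * log ((∑ i, a i ^ 2) / Fintype.card ι)
      - ∑ i, log (a i ^ 2)) / 2 := by
  have hS : 0 < ∑ i, a i ^ 2 := Finset.sum_pos (fun i _ => pow_pos (ha i) 2) univ_nonempty
  have hn : (0 : ℝ) < Fintype.card ι := by exact_mod_cast Fintype.card_pos
  simp only [euclideanLogGap, log_sqrt hS.le, log_div hS.ne' hn.ne', log_pow]
  push_cast
  rw [← Finset.mul_sum]
  ring

lemma euclideanLogGap_nonneg [Nonempty ι] (ha : ∀ i, 0 < a i) : 0 ≤ euclideanLogGap a := by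
  rw [euclideanLogGap_eq ha]
  have := Real.sum_log_le_card_mul_log_mean fun i => pow_pos (ha i) 2
  linarith

lemma euclideanLogGap_eq_zero_iff [Nonempty ι] (ha : ∀ i, 0 < a i) :
    euclideanLogGap a = 0 ↔ ∀ i j, a i = a j := by
  rw [euclideanLogGap_eq ha, div_eq_zero_iff, sub_eq_zero, eq_comm,
    Real.sum_log_eq_card_mul_log_mean_iff fun i => pow_pos (ha i) 2]
  simp only [two_ne_zero, or_false]
  exact forall₂_congr fun i j => pow_left_inj₀ (ha i).le (ha j).le two_ne_zero

lemma supLogGap_nonneg (ha : ∀ i, 0 < a i) : 0 ≤ supLogGap a :=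
  sub_nonneg.mpr (Real.sum_log_le_card_mul_log_iSup ha)

lemma supLogGap_eq_zero_iff [Nonempty ι] (ha : ∀ i, 0 < a i) :
    supLogGap a = 0 ↔ ∀ i j, a i = a j := by
  rw [supLogGap, sub_eq_zero, eq_comm, Real.sum_log_eq_card_mul_log_iSup_iff ha]

end LocalGaps

lemma finsum_eq_zero_iff_of_nonneg {α M : Type*} [AddCommMonoid M] [PartialOrder M]
    [IsOrderedAddMonoid M] {f : α → M} (hf : HasFiniteSupport f) (h : 0 ≤ f) :
    ∑ᶠ i, f i = 0 ↔ f = 0 :=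
  ⟨fun hs => funext fun i => le_antisymm (hs ▸ single_le_finsum i hf h :) (h i),
    fun h => by simp [h]⟩

lemma Function.HasFiniteMulSupport.log {α : Type*} {f : α → ℝ} (hf : HasFiniteMulSupport f) :
    HasFiniteSupport fun a => log (f a) :=
  Set.Finite.subset hf fun _ ha h => ha (by simp [h])

lemma Fin.forall_apply_cons_eq_iff {α β : Type*} {N : ℕ} (f : α → β) (a : α) (ξ : Fin N → α) :
    (∀ i j, f ((Fin.cons a ξ : Fin (N + 1) → α) i) = f ((Fin.cons a ξ : Fin (N + 1) → α) j)) ↔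
      ∀ i, f (ξ i) = f a := by
  refine ⟨fun h i => by simpa using h i.succ 0, fun h i j => ?_⟩
  have h' k : f ((Fin.cons a ξ : Fin (N + 1) → α) k) = f a := Fin.cases rfl h k
  rw [h' i, h' j]

namespace NumberField

variable {K : Type} [Field K] [NumberField K]

lemma finAbs_eq_finitePlace_mk (v : HeightOneSpectrum (𝓞 K)) (x : K) :
    finAbs v x = FinitePlace.mk v x := by
  rw [FinitePlace.mk_apply, FinitePlace.norm_embedding']
  by_cases hx : x = 0
  · simp [finAbs, hx]
  · rw [finAbs, dif_neg hx,
      WithZeroMulInt.toNNReal_neg_apply _ ((Valuation.ne_zero_iff _).mpr hx)]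
    simp

lemma projHeightK_eq {ι : Type} [Fintype ι] (η : ι → K) :
    projHeightK K η = ((∑ w : InfinitePlace K, w.mult * log √(∑ i, w (η i) ^ 2))
      + ∑ᶠ v : FinitePlace K, log (⨆ i, v (η i))) / Module.finrank ℚ K := by
  have hfin : ∑ᶠ v : HeightOneSpectrum (𝓞 K), log (⨆ i, finAbs v (η i))
      = ∑ᶠ v : FinitePlace K, log (⨆ i, v (η i)) := by
    simp_rw [finAbs_eq_finitePlace_mk]
    exact finsum_comp_equiv (f := fun v : FinitePlace K => log (⨆ i, v (η i)))
      FinitePlace.equivHeightOneSpectrum.symm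
  rw [projHeightK, ← mul_finsum, hfin, add_div, Finset.sum_div]
  congr 1
  · exact Finset.sum_congr rfl fun w _ => by ring
  · ring

lemma sum_mult_mul_log_add_finsum_log_eq_zero {x : K} (hx : x ≠ 0) :
    ∑ w : InfinitePlace K, w.mult * log (w x) + ∑ᶠ v : FinitePlace K, log (v x) = 0 := by
  have hw (w : InfinitePlace K) : w x ≠ 0 := (InfinitePlace.pos_iff.mpr hx).ne'
  have hv (v : FinitePlace K) : 0 < v x := FinitePlace.pos_iff.mpr hx
  have h := congrArg log (prod_abs_eq_one hx)
  rw [log_one, log_mul (Finset.prod_ne_zero_iff.mpr fun w _ => pow_ne_zero _ (hw w))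
    (finprod_ne_zero fun v => (hv v).ne'), log_prod fun w _ => pow_ne_zero _ (hw w),
    log_finprod hv] at h
  simpa only [log_pow] using h

lemma isIntegral_of_forall_finitePlace_le_one {x : K} (h : ∀ v : FinitePlace K, v x ≤ 1) :
    IsIntegral ℤ x := by
  obtain ⟨a, rfl⟩ := HeightOneSpectrum.mem_integers_of_valuation_le_one K x fun v => by
    have hv := h (FinitePlace.mk v)
    rw [FinitePlace.mk_apply, FinitePlace.norm_embedding'] at hv
    exact (WithZeroMulInt.toNNReal_le_one_iff
      (NumberField.HeightOneSpectrum.one_lt_absNorm_nnreal v)).mp (by exact_mod_cast hv)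
  exact RingOfIntegers.isIntegral_coe a

lemma exists_pow_eq_one_iff_forall_place_eq_one {x : K} :
    (∃ m : ℕ, 0 < m ∧ x ^ m = 1) ↔
      (∀ w : InfinitePlace K, w x = 1) ∧ ∀ v : FinitePlace K, v x = 1 := by
  constructor
  · rintro ⟨m, hm, hxm⟩
    have h {F : Type} [FunLike F K ℝ] [MonoidHomClass F K ℝ] [NonnegHomClass F K ℝ] (f : F) :
        f x = 1 :=
      (pow_eq_one_iff_of_nonneg (apply_nonneg f x) hm.ne').mp (by rw [← map_pow, hxm, map_one])
    exact ⟨h, h⟩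
  · rintro ⟨harch, hfin⟩
    obtain ⟨m, hm, hxm⟩ := Embeddings.pow_eq_one_of_norm_eq_one K ℂ
      (isIntegral_of_forall_finitePlace_le_one fun v => (hfin v).le)
      fun φ => harch (InfinitePlace.mk φ)
    exact ⟨m, hm, hxm⟩

section TupleWithNonzeroCoordinates

variable {ι : Type} [Fintype ι] {η : ι → K}

lemma hasFiniteSupport_log_iSup [Nonempty ι] (hη : ∀ i, η i ≠ 0) :
    HasFiniteSupport fun v : FinitePlace K => log (⨆ i, v (η i)) :=
  (HasFiniteMulSupport.iSup fun i => FinitePlace.hasFiniteMulSupport (hη i)).log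

lemma hasFiniteSupport_supLogGap [Nonempty ι] (hη : ∀ i, η i ≠ 0) :
    HasFiniteSupport fun v : FinitePlace K => supLogGap fun i => v (η i) :=
  ((hasFiniteSupport_log_iSup hη).fun_mul_right _).sub
    (HasFiniteSupport.sum (fun i => (FinitePlace.hasFiniteMulSupport (hη i)).log) _)

lemma card_mul_finrank_mul_projHeightK_sub_eq [Nonempty ι] (hη : ∀ i, η i ≠ 0) :
    Fintype.card ι * Module.finrank ℚ K * (projHeightK K η - log (Fintype.card ι) / 2) =
      ∑ w : InfinitePlace K, w.mult * euclideanLogGap (fun i => w (η i))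
        + ∑ᶠ v : FinitePlace K, supLogGap (fun i => v (η i)) := by
  have hd : (Module.finrank ℚ K : ℝ) ≠ 0 := by exact_mod_cast Module.finrank_pos.ne'
  have hlog i := (FinitePlace.hasFiniteMulSupport (hη i)).log
  have hmult : ∑ w : InfinitePlace K, (w.mult : ℝ) = Module.finrank ℚ K := by
    exact_mod_cast InfinitePlace.sum_mult_eq
  have harch : ∑ w : InfinitePlace K, w.mult * euclideanLogGap (fun i => w (η i))
      = Fintype.card ι * ∑ w : InfinitePlace K, w.mult * log √(∑ i, w (η i) ^ 2)
        - Module.finrank ℚ K * (Fintype.card ι * log (Fintype.card ι) / 2)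
        - ∑ i, ∑ w : InfinitePlace K, w.mult * log (w (η i)) :=
    calc ∑ w : InfinitePlace K, w.mult * euclideanLogGap (fun i => w (η i))
        = ∑ w : InfinitePlace K, (Fintype.card ι * (w.mult * log √(∑ i, w (η i) ^ 2))
            - Fintype.card ι * log (Fintype.card ι) / 2 * w.mult
            - ∑ i, w.mult * log (w (η i))) :=
          Finset.sum_congr rfl fun w _ => by rw [euclideanLogGap, mul_sub, Finset.mul_sum]; ring
      _ = _ := by
          rw [Finset.sum_sub_distrib, Finset.sum_sub_distrib, ← Finset.mul_sum,
            ← Finset.mul_sum, hmult, Finset.sum_comm]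
          ring
  have hnonarch : ∑ᶠ v : FinitePlace K, supLogGap (fun i => v (η i))
      = Fintype.card ι * ∑ᶠ v : FinitePlace K, log (⨆ i, v (η i))
        - ∑ i, ∑ᶠ v : FinitePlace K, log (v (η i)) := by
    rw [← finsum_sum_comm _ _ fun i _ => hlog i, mul_finsum,
      ← finsum_sub_distrib ((hasFiniteSupport_log_iSup hη).fun_mul_right _)
        (HasFiniteSupport.sum hlog _)]
    rfl
  have hproduct : ∑ i, (∑ w : InfinitePlace K, w.mult * log (w (η i))
      + ∑ᶠ v : FinitePlace K, log (v (η i))) = 0 :=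
    Finset.sum_eq_zero fun i _ => sum_mult_mul_log_add_finsum_log_eq_zero (hη i)
  rw [Finset.sum_add_distrib] at hproduct
  rw [projHeightK_eq, harch, hnonarch, mul_sub, mul_assoc, mul_div_cancel₀ _ hd]
  linear_combination hproduct

lemma sum_mult_mul_euclideanLogGap_nonneg [Nonempty ι] (hη : ∀ i, η i ≠ 0) :
    0 ≤ ∑ w : InfinitePlace K, w.mult * euclideanLogGap (fun i => w (η i)) :=
  Finset.sum_nonneg fun w _ => mul_nonneg w.mult.cast_nonneg
    (euclideanLogGap_nonneg fun i => InfinitePlace.pos_iff.mpr (hη i))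

lemma finsum_supLogGap_nonneg (hη : ∀ i, η i ≠ 0) :
    0 ≤ ∑ᶠ v : FinitePlace K, supLogGap (fun i => v (η i)) :=
  finsum_nonneg fun _ => supLogGap_nonneg fun i => FinitePlace.pos_iff.mpr (hη i)

lemma log_card_div_two_le_projHeightK [Nonempty ι] (hη : ∀ i, η i ≠ 0) :
    log (Fintype.card ι) / 2 ≤ projHeightK K η := by
  have hpos : (0 : ℝ) < Fintype.card ι * Module.finrank ℚ K := by
    have := Module.finrank_pos (R := ℚ) (M := K)
    positivity
  have hgaps := add_nonneg (sum_mult_mul_euclideanLogGap_nonneg hη) (finsum_supLogGap_nonneg hη)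
  rw [← card_mul_finrank_mul_projHeightK_sub_eq hη] at hgaps
  exact sub_nonneg.mp (nonneg_of_mul_nonneg_right hgaps hpos)

lemma projHeightK_eq_log_card_div_two_iff [Nonempty ι] (hη : ∀ i, η i ≠ 0) :
    projHeightK K η = log (Fintype.card ι) / 2 ↔
      (∀ w : InfinitePlace K, ∀ i j, w (η i) = w (η j)) ∧
        ∀ v : FinitePlace K, ∀ i j, v (η i) = v (η j) := by
  have hpos : (Fintype.card ι * Module.finrank ℚ K : ℝ) ≠ 0 := by
    have := Module.finrank_pos (R := ℚ) (M := K)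
    positivity
  rw [← sub_eq_zero, ← mul_eq_zero_iff_left hpos, card_mul_finrank_mul_projHeightK_sub_eq hη,
    add_eq_zero_iff_of_nonneg (sum_mult_mul_euclideanLogGap_nonneg hη)
      (finsum_supLogGap_nonneg hη),
    Finset.sum_eq_zero_iff_of_nonneg fun w _ => mul_nonneg w.mult.cast_nonneg
      (euclideanLogGap_nonneg fun i => InfinitePlace.pos_iff.mpr (hη i)),
    finsum_eq_zero_iff_of_nonneg (hasFiniteSupport_supLogGap hη)
      fun v => supLogGap_nonneg fun i => FinitePlace.pos_iff.mpr (hη i)]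
  simp only [Finset.mem_univ, forall_const, funext_iff, Pi.zero_apply]
  refine and_congr (forall_congr' fun w => ?_) (forall_congr' fun v => ?_)
  · rw [mul_eq_zero_iff_left (Nat.cast_ne_zero.mpr w.mult_ne_zero),
      euclideanLogGap_eq_zero_iff fun i => InfinitePlace.pos_iff.mpr (hη i)]
  · exact supLogGap_eq_zero_iff fun i => FinitePlace.pos_iff.mpr (hη i)

end TupleWithNonzeroCoordinates

end NumberField

/-- The projective height of a point `(1 : ξ_1 : ⋯ : ξ_N)` with nonzero coordinates
in a number field is at least `(1/2)·log(N+1)`, with equality if and only if every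
`ξ_i` is a root of unity. -/
theorem projHeight_torus_point_lower_bound {N : ℕ} (K : Type) [Field K] [NumberField K]
    (ξ : Fin N → K) (hξ : ∀ i, ξ i ≠ 0) :
    Real.log ((N : ℝ) + 1) / 2 ≤ projHeightK K (Fin.cons 1 ξ) ∧
    (projHeightK K (Fin.cons 1 ξ) = Real.log ((N : ℝ) + 1) / 2 ↔
      ∀ i, ∃ m : ℕ, 0 < m ∧ ξ i ^ m = 1) := by
  have hη : ∀ i, (Fin.cons 1 ξ : Fin (N + 1) → K) i ≠ 0 := Fin.cases one_ne_zero hξ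
  have hcard : (Fintype.card (Fin (N + 1)) : ℝ) = N + 1 := by simp
  refine ⟨hcard ▸ log_card_div_two_le_projHeightK hη, ?_⟩
  rw [← hcard, projHeightK_eq_log_card_div_two_iff hη]
  simp only [Fin.forall_apply_cons_eq_iff, map_one, exists_pow_eq_one_iff_forall_place_eq_one,
    forall_and]
  exact and_congr forall_comm forall_comm
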